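/- arXiv:1809.08414 — 4 statements merged into one kernel-verified Lean document; each statement's English description precedes it below -/
import Mathlib

section
/- Let V be a complex vector space of dimension at least 2k-1 for some k ≥ 2, and let ψ_{k-1}, ψ_k : V → V be invertible linear operators such that ψ_{k-1}(W_{k-1}) ⊆ ψ_k(W_k) for every pair of subspaces W_{k-1} ⊆ W_k of V with dim W_{k-1} = k-1 and dim W_k = k. Then ψ_{k-1} = c · ψ_k for some nonzero scalar c ∈ ℂ. -/
/-!
Put `φ = ψ₂⁻¹ ψ₁`. If `φ v` were not a multiple of `v`, then, since `dim V > k`, the line `K v`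
could be enlarged to a flag `W ≤ W'` of dimensions `k - 1`, `k` still avoiding `φ v`; the
hypothesis `ψ₁ W ≤ ψ₂ W'` then forces `φ v ∈ W'`. So `φ` preserves every line, hence is a scalar.
-/

open Module Submodule

section

variable {K V : Type*} [Field K] [AddCommGroup V] [Module K V]

namespace Submodule

theorem finrank_sup_span_singleton_of_finite {p : Submodule K V} [FiniteDimensional K p] {v : V}
    (hv : v ∉ p) : finrank K (p ⊔ K ∙ v : Submodule K V) = finrank K p + 1 := by
  have hv0 : v ≠ 0 := fun h ↦ hv (h ▸ p.zero_mem)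
  have hinf : p ⊓ K ∙ v = ⊥ := (disjoint_span_singleton_of_notMem hv).eq_bot
  have := finrank_sup_add_finrank_inf_eq p (K ∙ v)
  rwa [hinf, finrank_bot, add_zero, finrank_span_singleton hv0] at this

theorem exists_finrank_succ_of_notMem {W : Submodule K V} [FiniteDimensional K W] {u : V}
    (hu : u ∉ W) (hW : ((finrank K W + 1 : ℕ) : Cardinal) < Module.rank K V) :
    ∃ W' : Submodule K V, W ≤ W' ∧ FiniteDimensional K W' ∧
      finrank K W' = finrank K W + 1 ∧ u ∉ W' := by
  have hU : W ⊔ K ∙ u ≠ ⊤ := by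
    intro hU
    have hrank : Module.rank K ↥(W ⊔ K ∙ u) = Module.rank K V := by rw [hU, rank_top]
    rw [← finrank_sup_span_singleton_of_finite hu, finrank_eq_rank, hrank] at hW
    exact hW.false
  obtain ⟨x, -, hx⟩ := SetLike.exists_of_lt (lt_top_iff_ne_top.2 hU)
  have hxW : x ∉ W := fun h ↦ hx (mem_sup_left h)
  refine ⟨W ⊔ K ∙ x, le_sup_left, inferInstance, finrank_sup_span_singleton_of_finite hxW, ?_⟩
  intro hu'
  obtain ⟨y, hy, z, hz, hyz⟩ := mem_sup.1 hu'
  obtain ⟨a, rfl⟩ := mem_span_singleton.1 hz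
  have ha : a ≠ 0 := by
    rintro rfl
    exact hu (by simpa [← hyz] using hy)
  have hxu : x = a⁻¹ • (u - y) := by
    rw [← hyz, add_sub_cancel_left, smul_smul, inv_mul_cancel₀ ha, one_smul]
  exact hx (hxu ▸ smul_mem _ _
    (sub_mem (mem_sup_right (mem_span_singleton_self u)) (mem_sup_left hy)))

theorem exists_le_finrank_eq_of_notMem {W : Submodule K V} [FiniteDimensional K W] {u : V}
    (hu : u ∉ W) {n : ℕ} (hWn : finrank K W ≤ n) (hn : (n : Cardinal) < Module.rank K V) :
    ∃ W' : Submodule K V, W ≤ W' ∧ FiniteDimensional K W' ∧ finrank K W' = n ∧ u ∉ W' := by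
  induction n with
  | zero => exact ⟨W, le_rfl, inferInstance, by omega, hu⟩
  | succ n ih =>
    rcases hWn.eq_or_lt with hWn | hWn
    · exact ⟨W, le_rfl, inferInstance, hWn, hu⟩
    obtain ⟨W₁, hW₁, _, rfl, hu₁⟩ :=
      ih (Nat.le_of_lt_succ hWn) (lt_of_le_of_lt (by exact_mod_cast n.le_succ) hn)
    obtain ⟨W', hW', hfin, hrank, hu'⟩ := exists_finrank_succ_of_notMem hu₁ hn
    exact ⟨W', hW₁.trans hW', hfin, hrank, hu'⟩

end Submodule

theorem exists_flag_of_linearIndependent {k : ℕ} (hk : 2 ≤ k)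
    (hdim : (k : Cardinal) < Module.rank K V) {v u : V} (hvu : LinearIndependent K ![v, u]) :
    ∃ W W' : Submodule K V, W ≤ W' ∧ finrank K W = k - 1 ∧ finrank K W' = k ∧
      v ∈ W ∧ u ∉ W' := by
  have hv : v ≠ 0 := hvu.ne_zero 0
  have hu : u ∉ K ∙ v := fun h ↦ by
    obtain ⟨a, ha⟩ := mem_span_singleton.1 h
    exact (LinearIndependent.pair_iff' hv).1 hvu a ha
  obtain ⟨W, hvW, _, hW, huW⟩ := exists_le_finrank_eq_of_notMem hu
    (n := k - 1) (by rw [finrank_span_singleton hv]; omega)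
    (lt_of_le_of_lt (by exact_mod_cast k.sub_le 1) hdim)
  obtain ⟨W', hWW', -, hW', huW'⟩ := exists_le_finrank_eq_of_notMem huW (n := k) (by omega) hdim
  exact ⟨W, W', hWW', hW, hW', hvW (mem_span_singleton_self v), huW'⟩

theorem not_linearIndependent_symm_apply_of_map_le_map {k : ℕ} (hk : 2 ≤ k)
    (hdim : (k : Cardinal) < Module.rank K V) {ψ₁ ψ₂ : V ≃ₗ[K] V}
    (h : ∀ W W' : Submodule K V, W ≤ W' → finrank K W = k - 1 →
      finrank K W' = k → W.map (ψ₁ : V →ₗ[K] V) ≤ W'.map (ψ₂ : V →ₗ[K] V))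
    (v : V) : ¬ LinearIndependent K ![v, ψ₂.symm (ψ₁ v)] := fun hli ↦ by
  obtain ⟨W, W', hWW', hW, hW', hvW, huW'⟩ := exists_flag_of_linearIndependent hk hdim hli
  exact huW' ((mem_map_equiv _).1 (h W W' hWW' hW hW' (mem_map_of_mem hvW)))

end

/-- Lemma 1 of the paper: if invertible operators `ψ₁, ψ₂` on a complex vector space of
dimension at least `2k-1` (`k ≥ 2`) satisfy `ψ₁(W_{k-1}) ⊆ ψ₂(W_k)` for every pair of
subspaces `W_{k-1} ⊆ W_k` of dimensions `k-1` and `k`, then `ψ₁ = c • ψ₂` for some `c ≠ 0`. -/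
theorem stmt0 {V : Type*} [AddCommGroup V] [Module ℂ V] (k : ℕ) (hk : 2 ≤ k)
    (hdim : ((2 * k - 1 : ℕ) : Cardinal) ≤ Module.rank ℂ V)
    (ψ₁ ψ₂ : V ≃ₗ[ℂ] V)
    (h : ∀ W W' : Submodule ℂ V, W ≤ W' → Module.finrank ℂ W = k - 1 →
      Module.finrank ℂ W' = k → W.map (ψ₁ : V →ₗ[ℂ] V) ≤ W'.map (ψ₂ : V →ₗ[ℂ] V)) :
    ∃ c : ℂ, c ≠ 0 ∧ ∀ v : V, ψ₁ v = c • ψ₂ v := by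
  have hdim' : (k : Cardinal) < Module.rank ℂ V :=
    lt_of_lt_of_le (by exact_mod_cast (by omega : k < 2 * k - 1)) hdim
  obtain ⟨c, hc⟩ := LinearMap.exists_eq_smul_id_of_forall_notLinearIndependent
    (f := (ψ₂.symm : V →ₗ[ℂ] V) ∘ₗ ψ₁) (not_linearIndependent_symm_apply_of_map_le_map hk hdim' h)
  have hψ : ∀ v, ψ₁ v = c • ψ₂ v := fun v ↦ by
    rw [← map_smul, ← ψ₂.symm_apply_eq]
    exact LinearMap.congr_fun hc v
  refine ⟨c, fun hc0 ↦ ?_, hψ⟩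
  have : Nontrivial V := (rank_pos_iff_nontrivial (R := ℂ)).1 (zero_le.trans_lt hdim')
  obtain ⟨v, hv⟩ := exists_ne (0 : V)
  exact hv (ψ₁.map_eq_zero_iff.1 (by rw [hψ, hc0, zero_smul]))
end

section
/- Let V be a countable-dimensional vector space over ℂ with basis E, F_E^n = span{e_1,...,e_n}, GL(E,V) the group of automorphisms fixing all but finitely many e_i, and B_E the stabilizer in GL(V) of the flag (F_E^n)_n. Suppose g ∈ GL(V) maps Fl(F_E,E,V) to itself, i.e., for every flag F' ∈ Fl(F_E,E,V) the flag g(F') is again in Fl(F_E,E,V). Then g ∈ GL(E,V)·B_E, i.e., g = h·b for some product of elements of GL(E,V) and B_E. -/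
/-!
Applied to the standard flag itself, the hypothesis says that `g` stabilises
`span (e '' Iio n)` for all `n ≥ N`. The automorphism `h` acting as `g` on `span (e '' Iio N)` and
as the identity on the span of the remaining basis vectors moves only finitely many `e i` and
agrees with `g` on every member of the standard flag, so `b = h⁻¹ g` stabilises that flag.
-/

open Submodule Set

theorem Submodule.map_congr_of_eqOn {R M M₂ : Type*} [Semiring R] [AddCommMonoid M]
    [AddCommMonoid M₂] [Module R M] [Module R M₂] {f g : M →ₗ[R] M₂} {p : Submodule R M}
    (hfg : EqOn f g p) : p.map f = p.map g := by
  ext y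
  simp only [mem_map]
  exact exists_congr fun x => and_congr_right fun hx => by rw [hfg hx]

namespace LinearEquiv

variable {R M : Type*} [Ring R] [AddCommGroup M] [Module R M] {P Q : Submodule R M}

noncomputable def extendOfIsCompl (hPQ : IsCompl P Q) (f : M ≃ₗ[R] M)
    (hf : P.map (f : M →ₗ[R] M) = P) : M ≃ₗ[R] M :=
  (prodEquivOfIsCompl P Q hPQ).symm ≪≫ₗ
    ((f.ofSubmodules P P hf).prodCongr (LinearEquiv.refl R Q)) ≪≫ₗ prodEquivOfIsCompl P Q hPQ

variable (hPQ : IsCompl P Q) (f : M ≃ₗ[R] M) (hf : P.map (f : M →ₗ[R] M) = P)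

theorem extendOfIsCompl_apply_of_mem_left {x : M} (hx : x ∈ P) :
    extendOfIsCompl hPQ f hf x = f x := by
  simp [extendOfIsCompl, projection_apply_of_mem_left hPQ hx,
    projection_apply_of_mem_right hPQ.symm hx]

theorem extendOfIsCompl_apply_of_mem_right {x : M} (hx : x ∈ Q) :
    extendOfIsCompl hPQ f hf x = x := by
  simp [extendOfIsCompl, projection_apply_of_mem_left hPQ.symm hx,
    projection_apply_of_mem_right hPQ hx]

theorem map_extendOfIsCompl_sup {W : Submodule R M} (hWQ : W ≤ Q) :
    (P ⊔ W).map (extendOfIsCompl hPQ f hf : M →ₗ[R] M) = P ⊔ W := by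
  have hP : P.map (extendOfIsCompl hPQ f hf : M →ₗ[R] M) = P :=
    (map_congr_of_eqOn fun x hx => extendOfIsCompl_apply_of_mem_left hPQ f hf hx).trans hf
  have hW : W.map (extendOfIsCompl hPQ f hf : M →ₗ[R] M) = W :=
    (map_congr_of_eqOn (g := LinearMap.id) fun x hx =>
      extendOfIsCompl_apply_of_mem_right hPQ f hf (hWQ hx)).trans (map_id W)
  rw [Submodule.map_sup, hP, hW]

end LinearEquiv

namespace Module.Basis

variable {R M : Type*} [Ring R] [AddCommGroup M] [Module R M] (e : Basis ℕ R M)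

def initialSpan (n : ℕ) : Submodule R M :=
  span R (e '' Iio n)

theorem initialSpan_mono : Monotone e.initialSpan :=
  fun _ _ hmn => span_mono (image_mono (Iio_subset_Iio hmn))

theorem finrank_initialSpan [Nontrivial R] [StrongRankCondition R] (n : ℕ) :
    Module.finrank R (e.initialSpan n) = n := by
  have := finrank_span_eq_card (e.linearIndependent.comp _ (Fin.val_injective (n := n)))
  rwa [range_comp, Fin.range_val, Fintype.card_fin] at this

theorem isCompl_initialSpan (N : ℕ) : IsCompl (e.initialSpan N) (span R (e '' (Iio N)ᶜ)) :=
  e.linearIndependent.isCompl_span_image e.span_eq isCompl_compl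

theorem initialSpan_eq_sup {N n : ℕ} (hNn : N ≤ n) :
    e.initialSpan n = e.initialSpan N ⊔ span R (e '' Ico N n) := by
  rw [initialSpan, initialSpan, ← span_union, ← image_union, Iio_union_Ico_eq_Iio hNn]

theorem exists_finitary_map_initialSpan_eq (g : M ≃ₗ[R] M) {N : ℕ}
    (hg : ∀ n ≥ N, (e.initialSpan n).map (g : M →ₗ[R] M) = e.initialSpan n) :
    ∃ h : M ≃ₗ[R] M, {i | h (e i) ≠ e i}.Finite ∧
      ∀ n, (e.initialSpan n).map (h : M →ₗ[R] M) = (e.initialSpan n).map (g : M →ₗ[R] M) := by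
  set h := LinearEquiv.extendOfIsCompl (e.isCompl_initialSpan N) g (hg N le_rfl)
  have h_fix : ∀ i, N ≤ i → h (e i) = e i := fun i hi =>
    LinearEquiv.extendOfIsCompl_apply_of_mem_right _ _ _ (subset_span ⟨i, not_lt.2 hi, rfl⟩)
  refine ⟨h, (finite_Iio N).subset fun i hi => not_le.1 fun hNi => hi (h_fix i hNi), fun n => ?_⟩
  rcases le_total n N with hnN | hNn
  · exact map_congr_of_eqOn fun x hx =>
      LinearEquiv.extendOfIsCompl_apply_of_mem_left _ _ _ (e.initialSpan_mono hnN hx)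
  · rw [hg n hNn, e.initialSpan_eq_sup hNn]
    exact LinearEquiv.map_extendOfIsCompl_sup _ _ _
      (span_mono (image_mono fun i hi => not_lt.2 hi.1))

theorem exists_finitary_comp_flag_stabilizer (g : M ≃ₗ[R] M) {N : ℕ}
    (hg : ∀ n ≥ N, (e.initialSpan n).map (g : M →ₗ[R] M) = e.initialSpan n) :
    ∃ h b : M ≃ₗ[R] M, {i | h (e i) ≠ e i}.Finite ∧
      (∀ n, (e.initialSpan n).map (b : M →ₗ[R] M) = e.initialSpan n) ∧ ∀ v, g v = h (b v) := by
  obtain ⟨h, h_fin, h_map⟩ := e.exists_finitary_map_initialSpan_eq g hg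
  refine ⟨h, g ≪≫ₗ h.symm, h_fin, fun n => ?_, fun v => (h.apply_symm_apply (g v)).symm⟩
  rw [LinearEquiv.coe_trans, map_comp, ← h_map, map_symm_eq_iff]

end Module.Basis

/-- If `g ∈ GL(V)` maps every flag of `Fl(F_E,E,V)` to a flag of `Fl(F_E,E,V)`, then
`g = h ∘ b` with `h ∈ GL(E,V)` (fixing all but finitely many `e i`) and `b ∈ B_E`
(stabilizing every `F_E^n`). -/
theorem stmt10 {V : Type*} [AddCommGroup V] [Module ℂ V] (e : Module.Basis ℕ ℂ V) (g : V ≃ₗ[ℂ] V)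
    (hyp : ∀ F' : ℕ → Submodule ℂ V,
      (∀ k, F' k ≤ F' (k + 1)) → (∀ k, Module.finrank ℂ (F' k) = k) →
      (∃ N, ∀ n ≥ N, F' n = Submodule.span ℂ (e '' {i | i < n})) →
      ((∀ k, (F' k).map (g : V →ₗ[ℂ] V) ≤ (F' (k + 1)).map (g : V →ₗ[ℂ] V)) ∧
       (∀ k, Module.finrank ℂ ((F' k).map (g : V →ₗ[ℂ] V)) = k) ∧
       ∃ N, ∀ n ≥ N, (F' n).map (g : V →ₗ[ℂ] V) = Submodule.span ℂ (e '' {i | i < n}))) :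
    ∃ h b : V ≃ₗ[ℂ] V,
      {i : ℕ | h (e i) ≠ e i}.Finite ∧
      (∀ n : ℕ, (Submodule.span ℂ (e '' {i | i < n})).map (b : V →ₗ[ℂ] V) =
        Submodule.span ℂ (e '' {i | i < n})) ∧
      ∀ v : V, g v = h (b v) := by
  obtain ⟨-, -, N, hN⟩ := hyp e.initialSpan (fun k => e.initialSpan_mono k.le_succ)
    e.finrank_initialSpan ⟨0, fun _ _ => rfl⟩
  exact e.exists_finitary_comp_flag_stabilizer g hN
end

section
/- Let V be a countable-dimensional vector space over a field with basis E = {e_1, e_2, ...}, and let GL(E,V) be the group of automorphisms of V fixing all but finitely many e_i. Then GL(E,V) acts transitively on Fl(F_E,E,V): for any two chains F', F'' ∈ Fl(F_E,E,V) there exists g ∈ GL(E,V) with g(F'^k) = F''^k for all k ≥ 1. -/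
/-!
Choosing `v k ∈ F (k + 1) \ F k` for every `k`, and `v k = e k` once `F` agrees with the flag of
`e`, gives a basis of `V` adapted to `F` that differs from `e` in finitely many places. The
automorphism sending the adapted basis of `F'` to that of `F''` then maps `F'` to `F''` and moves
only finitely many `e i`.
-/

open Module Set Submodule

lemma Nat.Iio_add_one_eq_insert (k : ℕ) : Iio (k + 1) = insert k (Iio k) :=
  Order.Iio_succ_eq_insert k

section Flag

variable {K V : Type*} [Field K] [AddCommGroup V] [Module K V] {F : ℕ → Submodule K V}

lemma finiteDimensional_of_finrank_eq_self (hmono : ∀ k, F k ≤ F (k + 1))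
    (hdim : ∀ k, finrank K (F k) = k) (k : ℕ) : FiniteDimensional K (F k) :=
  haveI : FiniteDimensional K (F (k + 1)) := Module.finite_of_finrank_pos (by rw [hdim]; omega)
  Submodule.finiteDimensional_of_le (hmono k)

lemma lt_succ_of_finrank_eq_self (hmono : ∀ k, F k ≤ F (k + 1))
    (hdim : ∀ k, finrank K (F k) = k) (k : ℕ) : F k < F (k + 1) :=
  (hmono k).lt_of_ne fun h => by have := hdim (k + 1); rw [← h, hdim] at this; omega

lemma span_image_Iio_eq_of_finrank_eq_self (hmono : ∀ k, F k ≤ F (k + 1))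
    (hdim : ∀ k, finrank K (F k) = k) {v : ℕ → V} (hv : ∀ k, v k ∈ F (k + 1))
    (hv' : ∀ k, v k ∉ F k) (k : ℕ) : span K (v '' Iio k) = F k := by
  induction k with
  | zero =>
    have := finiteDimensional_of_finrank_eq_self hmono hdim 0
    simpa using (Submodule.finrank_eq_zero.mp (hdim 0)).symm
  | succ k ih =>
    have := finiteDimensional_of_finrank_eq_self hmono hdim (k + 1)
    rw [Nat.Iio_add_one_eq_insert, image_insert_eq, span_insert, ih]
    have hle : K ∙ v k ⊔ F k ≤ F (k + 1) :=
      sup_le ((span_singleton_le_iff_mem _ _).mpr (hv k)) (hmono k)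
    have hlt : F k < K ∙ v k ⊔ F k :=
      le_sup_right.lt_of_ne fun h => hv' k (h ▸ mem_sup_left (mem_span_singleton_self _))
    have := Submodule.finiteDimensional_of_le hle
    have := Submodule.finrank_lt_finrank_of_lt hlt
    exact eq_of_le_of_finrank_le hle (by rw [hdim] at *; omega)

end Flag

lemma linearIndependent_of_notMem_span_image_Iio {K V : Type*} [DivisionRing K] [AddCommGroup V]
    [Module K V] {v : ℕ → V} (hv : ∀ k, v k ∉ span K (v '' Iio k)) : LinearIndependent K v := by
  have hIio : ∀ k, LinearIndepOn K v (Iio k) := by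
    intro k
    induction k with
    | zero => simp
    | succ k ih =>
      rw [Nat.Iio_add_one_eq_insert, linearIndepOn_insert (by simp)]
      exact ⟨ih, hv k⟩
  rw [← linearIndepOn_univ_iff, ← iUnion_Iio]
  exact linearIndepOn_iUnion_of_directed (Monotone.directed_le fun _ _ => Iio_subset_Iio) hIio

lemma exists_basis_span_image_Iio_eq {K V : Type*} [Field K] [AddCommGroup V] [Module K V]
    (e : Basis ℕ K V) {F : ℕ → Submodule K V} (hmono : ∀ k, F k ≤ F (k + 1))
    (hdim : ∀ k, finrank K (F k) = k) (heq : ∃ N, ∀ n ≥ N, F n = span K (e '' Iio n)) :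
    ∃ b : Basis ℕ K V, (∀ k, span K (b '' Iio k) = F k) ∧ {i | b i ≠ e i}.Finite := by
  obtain ⟨N, hN⟩ := heq
  choose w hw using fun k => SetLike.exists_of_lt (lt_succ_of_finrank_eq_self hmono hdim k)
  let v : ℕ → V := fun k => if N ≤ k then e k else w k
  have hv : ∀ k, v k ∈ F (k + 1) ∧ v k ∉ F k := by
    intro k
    by_cases h : N ≤ k
    · simp only [v, if_pos h, hN k h, hN (k + 1) (by omega)]
      exact ⟨subset_span (mem_image_of_mem e (by simp)),
        e.linearIndependent.notMem_span_image (by simp)⟩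
    · simpa only [v, if_neg h] using hw k
  have hspan := span_image_Iio_eq_of_finrank_eq_self hmono hdim (fun k => (hv k).1)
    (fun k => (hv k).2)
  have hli : LinearIndependent K v :=
    linearIndependent_of_notMem_span_image_Iio fun k => hspan k ▸ (hv k).2
  have hsp : ⊤ ≤ span K (range v) := by
    rw [← e.span_eq, span_le]
    rintro _ ⟨i, rfl⟩
    have : e i ∈ span K (v '' Iio (max N (i + 1))) := by
      rw [hspan, hN _ (le_max_left _ _)]
      exact subset_span (mem_image_of_mem e (by simp))
    exact span_mono (image_subset_range _ _) this
  refine ⟨Basis.mk hli hsp, fun k => by simpa using hspan k, (finite_Iio N).subset fun i hi => ?_⟩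
  exact mem_Iio.mpr (not_le.mp fun h => hi (by simp [v, h]))

/-- `GL(E,V)` acts transitively on `Fl(F_E,E,V)`: for any two maximal ascending flags
equal to `F_E` in high positions there is an `E`-finitary automorphism mapping one to the
other. -/
theorem stmt11 {K V : Type*} [Field K] [AddCommGroup V] [Module K V] (e : Module.Basis ℕ K V)
    (F' F'' : ℕ → Submodule K V)
    (hmono' : ∀ k, F' k ≤ F' (k + 1)) (hdim' : ∀ k, Module.finrank K (F' k) = k)
    (heq' : ∃ N, ∀ n ≥ N, F' n = Submodule.span K (e '' {i | i < n}))
    (hmono'' : ∀ k, F'' k ≤ F'' (k + 1)) (hdim'' : ∀ k, Module.finrank K (F'' k) = k)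
    (heq'' : ∃ N, ∀ n ≥ N, F'' n = Submodule.span K (e '' {i | i < n})) :
    ∃ g : V ≃ₗ[K] V, {i : ℕ | g (e i) ≠ e i}.Finite ∧
      ∀ k, (F' k).map (g : V →ₗ[K] V) = F'' k := by
  obtain ⟨b', hspan', hfin'⟩ := exists_basis_span_image_Iio_eq e hmono' hdim' heq'
  obtain ⟨b'', hspan'', hfin''⟩ := exists_basis_span_image_Iio_eq e hmono'' hdim'' heq''
  let g := b'.equiv b'' (Equiv.refl ℕ)
  have hg : ∀ i, g (b' i) = b'' i := fun i => b'.equiv_apply i b'' _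
  refine ⟨g, (hfin'.union hfin'').subset fun i hi => ?_, fun k => ?_⟩
  · by_contra h
    simp only [mem_union, mem_ofPred_eq, not_or, not_not] at h
    exact hi (by rw [← h.1, hg, h.2, h.1])
  · rw [← hspan' k, ← hspan'' k, map_span, ← image_comp]
    exact congrArg (span K) (image_congr fun i _ => hg i)
end

section
/- Let V be a countable-dimensional vector space over ℂ with basis E = {e_1, e_2, ...}, F_E^n = span{e_1,...,e_n}, and B_E the stabilizer in GL(V) of the flag (F_E^n)_{n≥1}. Then the subgroup GL(E,V)·B_E generated by GL(E,V) and B_E is a proper subgroup of GL(V). -/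
/-!
Every generator, and its inverse, moves the flag `F n = span {e i | i < n}` up by a bounded number
of steps: a finitary automorphism `g` sends `F n` into `F (n + C)` as soon as `F C` contains the
finitely many vectors `g (e i) ≠ e i`, and an element of `B_E` preserves each `F n`. Bounded
displacement is stable under products, so it holds on the whole generated subgroup. But the basis
permutation induced by `(a, b) ↦ (b, a)` through `Nat.pair` sends `e (b * b)` to `e (b * b + b)`,
so its displacement is unbounded.
-/

open Submodule

section BoundedShift

variable {R V : Type*} [Semiring R] [AddCommMonoid V] [Module R V]

def boundedShift (F : ℕ → Submodule R V) : Submonoid (V ≃ₗ[R] V) where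
  carrier := {g | ∃ C, ∀ n, (F n).map (g : V →ₗ[R] V) ≤ F (n + C)}
  one_mem' := ⟨0, fun n => by simp⟩
  mul_mem' := by
    rintro a b ⟨Ca, ha⟩ ⟨Cb, hb⟩
    refine ⟨Cb + Ca, fun n => ?_⟩
    calc (F n).map ((a * b : V ≃ₗ[R] V) : V →ₗ[R] V)
        = ((F n).map (b : V →ₗ[R] V)).map (a : V →ₗ[R] V) := by
          rw [← map_comp]; rfl
      _ ≤ (F (n + Cb)).map (a : V →ₗ[R] V) := map_mono (hb n)
      _ ≤ F (n + (Cb + Ca)) := by rw [← add_assoc]; exact ha _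

theorem mem_boundedShift_of_map_eq {F : ℕ → Submodule R V} {g : V ≃ₗ[R] V}
    (hg : ∀ n, (F n).map (g : V →ₗ[R] V) = F n) : g ∈ boundedShift F :=
  ⟨0, fun n => (hg n).le⟩

end BoundedShift

theorem Subgroup.closure_toSubmonoid_le {G : Type*} [Group G] {S : Set G} {M : Submonoid G}
    (h : ∀ g ∈ S, g ∈ M ∧ g⁻¹ ∈ M) : (Subgroup.closure S).toSubmonoid ≤ M := by
  rw [Subgroup.closure_toSubmonoid, Submonoid.closure_le]
  rintro g (hg | hg)
  · exact (h g hg).1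
  · simpa using (h _ hg).2

theorem LinearEquiv.inv_apply_eq_self_iff {R V : Type*} [Semiring R] [AddCommMonoid V]
    [Module R V] (g : V ≃ₗ[R] V) (x : V) : g⁻¹ x = x ↔ g x = x := by
  rw [coe_inv, symm_apply_eq, eq_comm]

namespace Module.Basis

variable {R V : Type*} [Semiring R] [AddCommMonoid V] [Module R V] (e : Basis ℕ R V)

def natFlag (n : ℕ) : Submodule R V := span R (e '' {i | i < n})

theorem natFlag_mono : Monotone e.natFlag := fun _ _ hmn =>
  span_mono (Set.image_mono fun _ hi => lt_of_lt_of_le hi hmn)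

theorem self_mem_natFlag_iff [Nontrivial R] {i n : ℕ} : e i ∈ e.natFlag n ↔ i < n :=
  e.self_mem_span_image

theorem eventually_mem_natFlag (v : V) : ∀ᶠ n in Filter.atTop, v ∈ e.natFlag n := by
  refine Filter.eventually_atTop.2 ⟨(e.repr v).support.sup id + 1, fun n hn => ?_⟩
  rw [natFlag, mem_span_image]
  intro i hi
  exact lt_of_lt_of_le (Nat.lt_succ_of_le (Finset.le_sup (f := id) hi)) hn

theorem mem_boundedShift_natFlag_of_finite {g : V ≃ₗ[R] V}
    (hg : {i | g (e i) ≠ e i}.Finite) : g ∈ boundedShift e.natFlag := by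
  obtain ⟨C, hC⟩ := (hg.eventually_all.2 fun i _ => e.eventually_mem_natFlag (g (e i))).exists
  refine ⟨C, fun n => ?_⟩
  rw [natFlag, map_span, span_le]
  rintro _ ⟨_, ⟨i, hi, rfl⟩, rfl⟩
  by_cases hgi : g (e i) = e i
  · simp only [LinearEquiv.coe_coe, hgi, SetLike.mem_coe]
    exact e.natFlag_mono (Nat.le_add_right n C) (subset_span ⟨i, hi, rfl⟩)
  · exact e.natFlag_mono (Nat.le_add_left C n) (hC i hgi)

theorem lt_add_of_equiv_mem_boundedShift [Nontrivial R] {σ : Equiv.Perm ℕ}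
    (hσ : e.equiv e σ ∈ boundedShift e.natFlag) : ∃ C, ∀ i, σ i < i + 1 + C := by
  obtain ⟨C, hC⟩ := hσ
  refine ⟨C, fun i => ?_⟩
  rw [← e.self_mem_natFlag_iff, ← e.equiv_apply i e σ]
  exact hC (i + 1) (mem_map_of_mem (e.self_mem_natFlag_iff.2 i.lt_succ_self))

end Module.Basis

def Nat.pairSwap : Equiv.Perm ℕ :=
  Nat.pairEquiv.symm.trans ((Equiv.prodComm ℕ ℕ).trans Nat.pairEquiv)

theorem Nat.pairSwap_pair (a b : ℕ) : Nat.pairSwap (Nat.pair a b) = Nat.pair b a := by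
  simp [Nat.pairSwap]

theorem Nat.pairSwap_mul_self (b : ℕ) :
    Nat.pairSwap ((b + 1) * (b + 1)) = (b + 1) * (b + 1) + (b + 1) := by
  have h : Nat.pair 0 (b + 1) = (b + 1) * (b + 1) := by simp [Nat.pair]
  rw [← h, Nat.pairSwap_pair, h]
  simp [Nat.pair]

/-- The subgroup of `GL(V)` generated by `GL(E,V)` (the `E`-finitary automorphisms) and
`B_E` (the stabilizer of the flag `(F_E^n)ₙ`, `F_E^n = span{e 0,...,e (n-1)}`) is a proper
subgroup of `GL(V)`. -/
theorem stmt16 {V : Type*} [AddCommGroup V] [Module ℂ V] (e : Module.Basis ℕ ℂ V) :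
    Subgroup.closure
      ({g : V ≃ₗ[ℂ] V | {i : ℕ | g (e i) ≠ e i}.Finite} ∪
       {g : V ≃ₗ[ℂ] V | ∀ n : ℕ, (Submodule.span ℂ (e '' {i | i < n})).map (g : V →ₗ[ℂ] V) =
         Submodule.span ℂ (e '' {i | i < n})}) ≠ ⊤ := by
  intro htop
  have hle : (⊤ : Subgroup (V ≃ₗ[ℂ] V)).toSubmonoid ≤ boundedShift e.natFlag := by
    rw [← htop]
    refine Subgroup.closure_toSubmonoid_le ?_
    rintro g (hg | hg)
    · have hinv : {i | g⁻¹ (e i) ≠ e i} = {i | g (e i) ≠ e i} := by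
        simp only [Ne, LinearEquiv.inv_apply_eq_self_iff]
      exact ⟨e.mem_boundedShift_natFlag_of_finite hg,
        e.mem_boundedShift_natFlag_of_finite (hinv ▸ hg)⟩
    · exact ⟨mem_boundedShift_of_map_eq hg,
        mem_boundedShift_of_map_eq fun n => (map_symm_eq_iff g).2 (hg n)⟩
  obtain ⟨C, hC⟩ := e.lt_add_of_equiv_mem_boundedShift
    (hle (Subgroup.mem_top (e.equiv e Nat.pairSwap)))
  have hdisplacement := hC ((C + 1) * (C + 1))
  rw [Nat.pairSwap_mul_self] at hdisplacement
  omega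
end
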